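/- arXiv:math/0401314 — 3 statements merged into one kernel-verified Lean document; each statement's English description precedes it below -/
import Mathlib

section
/- Every set partition d ∈ A_k can be written as d = σ₁ t σ₂ where σ₁, σ₂ are permutation diagrams and t is a planar set partition; that is, A_k = S_k P_k S_k. -/
open scoped Classical

abbrev PD (k : ℕ) := Setoid (Fin k ⊕ Fin k)

namespace PD
variable {k : ℕ}

/-- embedding of a diagram's vertices as (top, middle) rows of a 3-row diagram -/
def ι₁ : Fin k ⊕ Fin k → Fin k ⊕ (Fin k ⊕ Fin k) :=
  Sum.elim (fun i => Sum.inl i) (fun j => Sum.inr (Sum.inl j))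

/-- embedding of a diagram's vertices as (middle, bottom) rows of a 3-row diagram -/
def ι₂ : Fin k ⊕ Fin k → Fin k ⊕ (Fin k ⊕ Fin k) :=
  Sum.elim (fun i => Sum.inr (Sum.inl i)) (fun j => Sum.inr (Sum.inr j))

/-- embedding of a diagram's vertices as (top, bottom) rows of a 3-row diagram -/
def ιout : Fin k ⊕ Fin k → Fin k ⊕ (Fin k ⊕ Fin k) :=
  Sum.elim (fun i => Sum.inl i) (fun j => Sum.inr (Sum.inr j))

/-- the equivalence on the 3-row diagram obtained by stacking `d₁` above `d₂` -/
def big (d₁ d₂ : PD k) : Setoid (Fin k ⊕ (Fin k ⊕ Fin k)) :=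
  Relation.EqvGen.setoid (fun x y =>
    (∃ a b, d₁.r a b ∧ ι₁ a = x ∧ ι₁ b = y) ∨
    (∃ a b, d₂.r a b ∧ ι₂ a = x ∧ ι₂ b = y))

/-- composition of partition diagrams -/
def comp (d₁ d₂ : PD k) : PD k := Setoid.comap ιout (big d₁ d₂)

/-- the propagating number: the number of blocks meeting both the top and the bottom row -/
noncomputable def pn (d : PD k) : ℕ :=
  Nat.card {c : Quotient d //
    (∃ i : Fin k, Quotient.mk d (Sum.inl i) = c) ∧
    (∃ j : Fin k, Quotient.mk d (Sum.inr j) = c)}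

/-- the identity diagram, with blocks {i, i'} -/
def one : PD k := Setoid.ker (Sum.elim id id)

/-- the diagram of a permutation σ, with blocks {i, σ(i)'} -/
def permDiagram (σ : Equiv.Perm (Fin k)) : PD k :=
  Setoid.ker (Sum.elim (fun i => σ i) id)

/-- position of a vertex in the boundary order 1,2,…,k,k',…,2',1' -/
def ord : Fin k ⊕ Fin k → ℕ :=
  Sum.elim (fun i => (i : ℕ)) (fun j => 2 * k - 1 - (j : ℕ))

/-- a set partition is planar iff it is noncrossing for the boundary order -/
def Planar (d : PD k) : Prop :=
  ¬ ∃ a b c e : Fin k ⊕ Fin k,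
      ord a < ord b ∧ ord b < ord c ∧ ord c < ord e ∧
      d.r a c ∧ d.r b e ∧ ¬ d.r a b

/-- all blocks have exactly two elements -/
def BlocksSize2 (d : PD k) : Prop := ∀ x, Nat.card {y // d.r x y} = 2

end PD


namespace PDaux
open PD
variable {k : ℕ}

lemma comap_comap {α β γ : Type*} (f : α → β) (g : β → γ) (s : Setoid γ) :
    Setoid.comap f (Setoid.comap g s) = Setoid.comap (g ∘ f) s :=
  Setoid.ext fun _ _ => Iff.rfl

lemma big_permL (σ : Equiv.Perm (Fin k)) (d : PD k) :
    big (permDiagram σ) d =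
      Setoid.comap (Sum.elim (fun i => Sum.inl (σ i)) id) d := by
  set g : Fin k ⊕ (Fin k ⊕ Fin k) → Fin k ⊕ Fin k :=
    Sum.elim (fun i => Sum.inl (σ i)) id with hg
  apply Setoid.ext
  intro x y
  constructor
  · intro h
    show d.r (g x) (g y)
    induction h with
    | rel x y hxy =>
      rcases hxy with ⟨a, b, hab, hx, hy⟩ | ⟨a, b, hab, hx, hy⟩
      · subst hx; subst hy
        have key : ∀ z : Fin k ⊕ Fin k,
            g (ι₁ z) = Sum.inl (Sum.elim (fun i => σ i) id z) := by
          intro z; cases z <;> rfl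
        rw [key, key, hab]
      · subst hx; subst hy
        have key : ∀ z : Fin k ⊕ Fin k, g (ι₂ z) = z := by
          intro z; cases z <;> rfl
        rw [key, key]; exact hab
    | refl x => exact d.refl _
    | symm _ _ _ ih => exact d.symm ih
    | trans _ _ _ _ _ ih1 ih2 => exact d.trans ih1 ih2
  · intro h
    have h' : d.r (g x) (g y) := h
    have step : ∀ z, (big (permDiagram σ) d).r z (ι₂ (g z)) := by
      intro z
      rcases z with i | w
      · exact Relation.EqvGen.rel _ _
          (Or.inl ⟨Sum.inl i, Sum.inr (σ i), rfl, rfl, rfl⟩)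
      · rcases w with i | j
        · exact Relation.EqvGen.refl _
        · exact Relation.EqvGen.refl _
    have mid : (big (permDiagram σ) d).r (ι₂ (g x)) (ι₂ (g y)) :=
      Relation.EqvGen.rel _ _ (Or.inr ⟨g x, g y, h', rfl, rfl⟩)
    exact (big (permDiagram σ) d).trans (step x)
      ((big (permDiagram σ) d).trans mid ((big (permDiagram σ) d).symm (step y)))

lemma big_permR (σ : Equiv.Perm (Fin k)) (d : PD k) :
    big d (permDiagram σ) =
      Setoid.comap
        (Sum.elim Sum.inl (Sum.elim Sum.inr (fun j => Sum.inr (σ.symm j)))) d := by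
  set g : Fin k ⊕ (Fin k ⊕ Fin k) → Fin k ⊕ Fin k :=
    Sum.elim Sum.inl (Sum.elim Sum.inr (fun j => Sum.inr (σ.symm j))) with hg
  apply Setoid.ext
  intro x y
  constructor
  · intro h
    show d.r (g x) (g y)
    induction h with
    | rel x y hxy =>
      rcases hxy with ⟨a, b, hab, hx, hy⟩ | ⟨a, b, hab, hx, hy⟩
      · subst hx; subst hy
        have key : ∀ z : Fin k ⊕ Fin k, g (ι₁ z) = z := by
          intro z; cases z <;> rfl
        rw [key, key]; exact hab
      · subst hx; subst hy
        have key : ∀ z : Fin k ⊕ Fin k,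
            g (ι₂ z) = Sum.inr (σ.symm (Sum.elim (fun i => σ i) id z)) := by
          intro z; cases z with
          | inl i => show Sum.inr i = Sum.inr (σ.symm (σ i)); rw [Equiv.symm_apply_apply]
          | inr j => rfl
        rw [key, key, hab]
    | refl x => exact d.refl _
    | symm _ _ _ ih => exact d.symm ih
    | trans _ _ _ _ _ ih1 ih2 => exact d.trans ih1 ih2
  · intro h
    have h' : d.r (g x) (g y) := h
    have step : ∀ z, (big d (permDiagram σ)).r z (ι₁ (g z)) := by
      intro z
      rcases z with i | w
      · exact Relation.EqvGen.refl _
      · rcases w with i | j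
        · exact Relation.EqvGen.refl _
        · refine Relation.EqvGen.symm _ _ (Relation.EqvGen.rel _ _
            (Or.inr ⟨Sum.inl (σ.symm j), Sum.inr j, ?_, rfl, rfl⟩))
          show σ (σ.symm j) = j
          exact Equiv.apply_symm_apply σ j
    have mid : (big d (permDiagram σ)).r (ι₁ (g x)) (ι₁ (g y)) :=
      Relation.EqvGen.rel _ _ (Or.inl ⟨g x, g y, h', rfl, rfl⟩)
    exact (big d (permDiagram σ)).trans (step x)
      ((big d (permDiagram σ)).trans mid ((big d (permDiagram σ)).symm (step y)))

lemma comp_permL (σ : Equiv.Perm (Fin k)) (d : PD k) :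
    comp (permDiagram σ) d = Setoid.comap (Sum.map σ id) d := by
  unfold comp
  rw [big_permL, comap_comap]
  have : (Sum.elim (fun i => (Sum.inl (σ i) : Fin k ⊕ Fin k)) id) ∘ ιout
      = Sum.map σ id := by
    funext z; cases z <;> rfl
  rw [this]

lemma comp_permR (σ : Equiv.Perm (Fin k)) (d : PD k) :
    comp d (permDiagram σ) = Setoid.comap (Sum.map id σ.symm) d := by
  unfold comp
  rw [big_permR, comap_comap]
  have : (Sum.elim Sum.inl (Sum.elim Sum.inr (fun j => Sum.inr (σ.symm j)))) ∘
      (ιout (k := k)) = Sum.map id σ.symm := by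
    funext z; cases z <;> rfl
  rw [this]

end PDaux

/-- Every set partition `d ∈ A_k` factors as `d = σ₁ ∘ t ∘ σ₂` with `σ₁, σ₂`
permutation diagrams and `t` planar; that is, `A_k = S_k P_k S_k`. -/
theorem partition_eq_perm_planar_perm (k : ℕ) (d : PD k) :
    ∃ (σ₁ σ₂ : Equiv.Perm (Fin k)) (t : PD k), PD.Planar t ∧
      d = PD.comp (PD.permDiagram σ₁) (PD.comp t (PD.permDiagram σ₂)) := by
  classical
  obtain ⟨F, hF⟩ := Countable.exists_injective_nat (Quotient d)
  set κ : Fin k ⊕ Fin k → ℕ := fun x => F (Quotient.mk d x) with hκdef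
  have hκ : ∀ x y, κ x = κ y ↔ d.r x y := by
    intro x y
    constructor
    · intro h; exact Quotient.exact (hF h)
    · intro h; exact congrArg F (Quotient.sound h)
  set f₁ : Fin k → ℕ := fun i => κ (Sum.inl i) with hf₁
  set f₂ : Fin k → ℕ := fun j => κ (Sum.inr j) with hf₂
  set M : Fin k ⊕ Fin k → Fin k ⊕ Fin k :=
    Sum.map (Tuple.sort f₁) (Tuple.sort f₂) with hM
  refine ⟨(Tuple.sort f₁).symm, Tuple.sort f₂, Setoid.comap M d, ?_, ?_⟩
  · rintro ⟨a, b, c, e, hab, hbc, hce, hac, hbe, hnab⟩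
    have hac' : κ (M a) = κ (M c) := (hκ _ _).mpr hac
    have hbe' : κ (M b) = κ (M e) := (hκ _ _).mpr hbe
    have hnab' : κ (M a) ≠ κ (M b) := fun h => hnab ((hκ _ _).mp h)
    have m1 : Monotone (f₁ ∘ Tuple.sort f₁) := Tuple.monotone_sort f₁
    have m2 : Monotone (f₂ ∘ Tuple.sort f₂) := Tuple.monotone_sort f₂
    rcases a with ia | ja <;> rcases b with ib | jb <;> rcases c with ic | jc <;>
        rcases e with ie | je <;>
      simp only [PD.ord, Sum.elim_inl, Sum.elim_inr] at hab hbc hce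
    · exact hnab' (le_antisymm (m1 (Fin.le_def.mpr hab.le))
        ((m1 (Fin.le_def.mpr hbc.le)).trans (le_of_eq hac'.symm)))
    · exact hnab' (le_antisymm (m1 (Fin.le_def.mpr hab.le))
        ((m1 (Fin.le_def.mpr hbc.le)).trans (le_of_eq hac'.symm)))
    · have := jc.isLt; have := ie.isLt; omega
    · have h2 : (f₂ ∘ Tuple.sort f₂) je ≤ (f₂ ∘ Tuple.sort f₂) jc :=
        m2 (Fin.le_def.mpr (by have := jc.isLt; have := je.isLt; omega))
      exact hnab' (le_antisymm (m1 (Fin.le_def.mpr hab.le))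
        (hbe'.trans_le (h2.trans (le_of_eq hac'.symm))))
    · have := jb.isLt; have := ic.isLt; omega
    · have := jb.isLt; have := ic.isLt; omega
    · have := jc.isLt; have := ie.isLt; omega
    · have h2 : (f₂ ∘ Tuple.sort f₂) je ≤ (f₂ ∘ Tuple.sort f₂) jc :=
        m2 (Fin.le_def.mpr (by have := jc.isLt; have := je.isLt; omega))
      have h3 : (f₂ ∘ Tuple.sort f₂) jc ≤ (f₂ ∘ Tuple.sort f₂) jb :=
        m2 (Fin.le_def.mpr (by have := jc.isLt; have := jb.isLt; omega))
      exact hnab' (hac'.trans (le_antisymm h3 (hbe'.trans_le h2)))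
    · have := ja.isLt; have := ib.isLt; omega
    · have := ja.isLt; have := ib.isLt; omega
    · have := ja.isLt; have := ib.isLt; omega
    · have := ja.isLt; have := ib.isLt; omega
    · have := jb.isLt; have := ic.isLt; omega
    · have := jb.isLt; have := ic.isLt; omega
    · have := jc.isLt; have := ie.isLt; omega
    · have h2 : (f₂ ∘ Tuple.sort f₂) je ≤ (f₂ ∘ Tuple.sort f₂) jc :=
        m2 (Fin.le_def.mpr (by have := jc.isLt; have := je.isLt; omega))
      have h3 : (f₂ ∘ Tuple.sort f₂) jc ≤ (f₂ ∘ Tuple.sort f₂) jb :=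
        m2 (Fin.le_def.mpr (by have := jc.isLt; have := jb.isLt; omega))
      exact hnab' (hac'.trans (le_antisymm h3 (hbe'.trans_le h2)))
  · rw [PDaux.comp_permR, PDaux.comp_permL, PDaux.comap_comap, PDaux.comap_comap]
    have hid : M ∘ (Sum.map id (Tuple.sort f₂).symm ∘
        Sum.map ((Tuple.sort f₁).symm) id) = id := by
      funext z; cases z with
      | inl i => simp [hM]
      | inr j => simp [hM]
    rw [hid]
    exact Setoid.ext fun _ _ => Iff.rfl
end

section
/- Let V be an n-dimensional complex vector space with the permutation action of S_n. The representation Φ_k: CA_k(n) → End(V^{⊗k}) defined on diagrams by (d)^{i_1,...,i_k}_{i_{1'},...,i_{k'}} = 1 if i_r = i_s whenever r,s lie in the same block of d, and 0 otherwise, is a homomorphism of algebras whose image is End_{S_n}(V^{⊗k}), the centralizer of the S_n action on V^{⊗k}. -/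
open scoped Classical

/-- The underlying vector space of the partition algebra `ℂA_k(n)`: formal
ℂ-linear combinations of partition diagrams. -/
abbrev PA (k : ℕ) := PD k →₀ ℂ

namespace PD
variable {k : ℕ}

/-- the number of connected components removed from the middle row when
composing the diagrams `d₁` and `d₂` -/
noncomputable def removed (d₁ d₂ : PD k) : ℕ :=
  Nat.card {c : Quotient (big d₁ d₂) //
    ∀ x : Fin k ⊕ Fin k, Quotient.mk (big d₁ d₂) (ιout x) ≠ c}

end PD

/-- multiplication of the partition algebra `ℂA_k(n)`:
`d₁ · d₂ = n ^ ℓ (d₁ ∘ d₂)` on diagrams, extended bilinearly. -/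
noncomputable def mulPA {k : ℕ} (n : ℂ) (a b : PA k) : PA k :=
  a.sum fun d₁ c₁ => b.sum fun d₂ c₂ =>
    Finsupp.single (PD.comp d₁ d₂) (c₁ * c₂ * n ^ PD.removed d₁ d₂)

/-- the subspace `ℂI_k(n)` spanned by the diagrams of propagating number `< k` -/
noncomputable def Ik (k : ℕ) : Submodule ℂ (PA k) :=
  Submodule.span ℂ {v | ∃ d : PD k, PD.pn d < k ∧ v = Finsupp.single d (1 : ℂ)}

/-- the matrix of the action of a partition diagram `d` on `V^{⊗k}`
(`V = ℂ^n` with basis indexed by `Fin n`): the `(i, i')` entry is `1` if the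
indices are constant on the blocks of `d` (top row labelled by `i`, bottom row
by `i'`), and `0` otherwise. -/
noncomputable def Mdiag (k n : ℕ) (d : PD k) :
    Matrix (Fin k → Fin n) (Fin k → Fin n) ℂ := fun i j =>
  if ∀ x y, d.r x y → Sum.elim i j x = Sum.elim i j y then 1 else 0

/-- the representation `Φ_k : ℂA_k(n) → End(V^{⊗k})` -/
noncomputable def Phi (k n : ℕ) (a : PA k) :
    Matrix (Fin k → Fin n) (Fin k → Fin n) ℂ :=
  a.sum fun d c => c • Mdiag k n d

/-- the matrix of a permutation `σ ∈ S_n` acting diagonally on `V^{⊗k}` -/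
noncomputable def permMat (k n : ℕ) (σ : Equiv.Perm (Fin n)) :
    Matrix (Fin k → Fin n) (Fin k → Fin n) ℂ := fun i j =>
  if i = (fun r => σ (j r)) then 1 else 0

/-! ### Auxiliary development -/

section Aux

variable {k n : ℕ}

instance : Finite (PD k) :=
  Finite.of_injective (fun s : PD k => s.r) fun a b h => Setoid.ext fun x y => by
    simp only at h; rw [show a.r = b.r from h]

lemma mdiag_apply (d : PD k) (i j : Fin k → Fin n) :
    Mdiag k n d i j = if d ≤ Setoid.ker (Sum.elim i j) then 1 else 0 := by
  unfold Mdiag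
  exact if_congr ⟨fun h x y hxy => h x y hxy, fun h x y hxy => h hxy⟩ rfl rfl

lemma ker_comp_perm (σ : Equiv.Perm (Fin n)) {α : Type*} (f : α → Fin n) :
    Setoid.ker (fun x => σ (f x)) = Setoid.ker f :=
  Setoid.ext fun x y => ⟨fun h => σ.injective h, fun h => congrArg σ h⟩

/-- key combinatorial fact: `big d₁ d₂` is below a kernel iff both pieces are. -/
lemma big_le_ker_iff (d₁ d₂ : PD k) (i m j : Fin k → Fin n) :
    PD.big d₁ d₂ ≤ Setoid.ker (Sum.elim i (Sum.elim m j)) ↔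
      d₁ ≤ Setoid.ker (Sum.elim i m) ∧ d₂ ≤ Setoid.ker (Sum.elim m j) := by
  constructor
  · intro h
    constructor
    · intro x y hxy
      have hb : (PD.big d₁ d₂).r (PD.ι₁ x) (PD.ι₁ y) :=
        Relation.EqvGen.rel _ _ (Or.inl ⟨x, y, hxy, rfl, rfl⟩)
      have := h hb
      cases x <;> cases y <;> exact this
    · intro x y hxy
      have hb : (PD.big d₁ d₂).r (PD.ι₂ x) (PD.ι₂ y) :=
        Relation.EqvGen.rel _ _ (Or.inr ⟨x, y, hxy, rfl, rfl⟩)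
      have := h hb
      cases x <;> cases y <;> exact this
  · rintro ⟨h₁, h₂⟩
    apply Setoid.eqvGen_le
    rintro x y (⟨a, b, hab, rfl, rfl⟩ | ⟨a, b, hab, rfl, rfl⟩)
    · have := h₁ hab
      cases a <;> cases b <;> exact this
    · have := h₂ hab
      cases a <;> cases b <;> exact this

lemma comp_le_of_big_le (d₁ d₂ : PD k) (i m j : Fin k → Fin n)
    (h : PD.big d₁ d₂ ≤ Setoid.ker (Sum.elim i (Sum.elim m j))) :
    PD.comp d₁ d₂ ≤ Setoid.ker (Sum.elim i j) := by
  intro x y hxy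
  have := h hxy
  cases x <;> cases y <;> exact this

/-- counting middle labelings -/
lemma card_middle (hn : 0 < n) (d₁ d₂ : PD k) (i j : Fin k → Fin n)
    (hij : PD.comp d₁ d₂ ≤ Setoid.ker (Sum.elim i j)) :
    Nat.card {m : Fin k → Fin n //
        PD.big d₁ d₂ ≤ Setoid.ker (Sum.elim i (Sum.elim m j))} =
      n ^ PD.removed d₁ d₂ := by
  set B := Quotient (PD.big d₁ d₂) with hB
  have e₁ : {m : Fin k → Fin n //
      PD.big d₁ d₂ ≤ Setoid.ker (Sum.elim i (Sum.elim m j))} ≃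
      {f : B → Fin n // ∀ x : Fin k ⊕ Fin k,
        f (Quotient.mk (PD.big d₁ d₂) (PD.ιout x)) = Sum.elim i j x} :=
    { toFun := fun mh =>
        ⟨Quotient.lift (Sum.elim i (Sum.elim mh.1 j)) (fun a b hab => mh.2 hab),
         fun x => by cases x <;> rfl⟩
      invFun := fun fh =>
        ⟨fun t => fh.1 (Quotient.mk _ (Sum.inr (Sum.inl t))), by
          intro a b hab
          have hq : Quotient.mk (PD.big d₁ d₂) a = Quotient.mk _ b := Quotient.sound hab
          have key : ∀ z, Sum.elim i
              (Sum.elim (fun t => fh.1 (Quotient.mk (PD.big d₁ d₂) (Sum.inr (Sum.inl t)))) j) z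
              = fh.1 (Quotient.mk (PD.big d₁ d₂) z) := by
            rintro (r | (t | r))
            · exact (fh.2 (Sum.inl r)).symm
            · rfl
            · exact (fh.2 (Sum.inr r)).symm
          show Sum.elim i _ a = Sum.elim i _ b
          rw [key, key, hq]⟩
      left_inv := fun mh => Subtype.ext (funext fun t => rfl)
      right_inv := fun fh => Subtype.ext (funext fun c => by
        induction c using Quotient.ind with
        | _ z =>
          show Sum.elim i _ z = fh.1 (Quotient.mk _ z)
          rcases z with r | (t | r)
          · exact (fh.2 (Sum.inl r)).symm
          · rfl
          · exact (fh.2 (Sum.inr r)).symm) }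
  have hφex : ∀ x : Fin k ⊕ Fin k,
      ∃ z, Quotient.mk (PD.big d₁ d₂) (PD.ιout z) = Quotient.mk (PD.big d₁ d₂) (PD.ιout x) :=
    fun x => ⟨x, rfl⟩
  set φ : B → Fin n := fun c =>
    if hc : ∃ z, Quotient.mk (PD.big d₁ d₂) (PD.ιout z) = c then Sum.elim i j hc.choose
    else ⟨0, hn⟩ with hφdef
  have hφ : ∀ x : Fin k ⊕ Fin k, φ (Quotient.mk (PD.big d₁ d₂) (PD.ιout x)) = Sum.elim i j x := by
    intro x
    rw [hφdef]
    dsimp only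
    rw [dif_pos (hφex x)]
    have hch := (hφex x).choose_spec
    have hrel : (PD.big d₁ d₂).r (PD.ιout (hφex x).choose) (PD.ιout x) := Quotient.exact hch
    exact hij (show (PD.comp d₁ d₂).r (hφex x).choose x from hrel)
  have e₂ : {f : B → Fin n // ∀ x : Fin k ⊕ Fin k,
        f (Quotient.mk (PD.big d₁ d₂) (PD.ιout x)) = Sum.elim i j x} ≃
      ({c : B // ∀ x : Fin k ⊕ Fin k, Quotient.mk (PD.big d₁ d₂) (PD.ιout x) ≠ c} → Fin n) :=
    { toFun := fun fh c => fh.1 c.1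
      invFun := fun h =>
        ⟨fun c => if hc : ∀ x : Fin k ⊕ Fin k, Quotient.mk (PD.big d₁ d₂) (PD.ιout x) ≠ c
            then h ⟨c, hc⟩ else φ c, by
          intro x
          dsimp only
          rw [dif_neg (by push_neg; exact ⟨x, rfl⟩)]
          exact hφ x⟩
      left_inv := fun fh => Subtype.ext (funext fun c => by
        dsimp only
        by_cases hc : ∀ x : Fin k ⊕ Fin k, Quotient.mk (PD.big d₁ d₂) (PD.ιout x) ≠ c
        · rw [dif_pos hc]
        · rw [dif_neg hc]
          push_neg at hc
          obtain ⟨x, hx⟩ := hc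
          rw [← hx, hφ x]
          exact (fh.2 x).symm)
      right_inv := fun h => funext fun c => by
        show (if hc : _ then h ⟨c.1, hc⟩ else φ c.1) = h c
        rw [dif_pos c.2]
         }
  rw [Nat.card_congr (e₁.trans e₂), Nat.card_fun, Nat.card_eq_fintype_card, Fintype.card_fin]
  rfl


lemma mdiag_mul (hn : 0 < n) (d₁ d₂ : PD k) :
    Mdiag k n d₁ * Mdiag k n d₂ =
      (n : ℂ) ^ PD.removed d₁ d₂ • Mdiag k n (PD.comp d₁ d₂) := by
  ext i j
  rw [Matrix.mul_apply, Matrix.smul_apply, mdiag_apply]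
  have hterm : ∀ m : Fin k → Fin n, Mdiag k n d₁ i m * Mdiag k n d₂ m j =
      if PD.big d₁ d₂ ≤ Setoid.ker (Sum.elim i (Sum.elim m j)) then (1 : ℂ) else 0 := by
    intro m
    rw [mdiag_apply, mdiag_apply, ite_zero_mul_ite_zero, mul_one]
    exact if_congr (big_le_ker_iff d₁ d₂ i m j).symm rfl rfl
  simp only [hterm]
  rw [Finset.sum_boole]
  by_cases hij : PD.comp d₁ d₂ ≤ Setoid.ker (Sum.elim i j)
  · rw [if_pos hij, smul_eq_mul, mul_one]
    have := card_middle hn d₁ d₂ i j hij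
    rw [Nat.card_eq_fintype_card, Fintype.card_subtype] at this
    rw [this]
    push_cast
    ring
  · rw [if_neg hij, smul_eq_mul, mul_zero]
    have hempty : Finset.univ.filter
        (fun m => PD.big d₁ d₂ ≤ Setoid.ker (Sum.elim i (Sum.elim m j))) = ∅ := by
      apply Finset.filter_false_of_mem
      intro m _ hm
      exact hij (comp_le_of_big_le d₁ d₂ i m j hm)
    rw [hempty]
    simp

lemma permMat_mul_apply (σ : Equiv.Perm (Fin n))
    (X : Matrix (Fin k → Fin n) (Fin k → Fin n) ℂ) (i j : Fin k → Fin n) :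
    (permMat k n σ * X) i j = X (fun r => σ⁻¹ (i r)) j := by
  rw [Matrix.mul_apply]
  rw [Finset.sum_eq_single (fun r => σ⁻¹ (i r))]
  · rw [show permMat k n σ i (fun r => σ⁻¹ (i r)) = 1 from if_pos (by funext r; simp), one_mul]
  · intro p _ hp
    rw [show permMat k n σ i p = 0 from if_neg ?_, zero_mul]
    intro h
    apply hp
    funext r
    rw [congrFun h r]
    simp
  · intro h
    exact absurd (Finset.mem_univ _) h

lemma mul_permMat_apply (σ : Equiv.Perm (Fin n))
    (X : Matrix (Fin k → Fin n) (Fin k → Fin n) ℂ) (i j : Fin k → Fin n) :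
    (X * permMat k n σ) i j = X i (fun r => σ (j r)) := by
  rw [Matrix.mul_apply]
  rw [Finset.sum_eq_single (fun r => σ (j r))]
  · rw [show permMat k n σ (fun r => σ (j r)) j = 1 from if_pos rfl, mul_one]
  · intro p _ hp
    rw [show permMat k n σ p j = 0 from if_neg (fun h => hp h), mul_zero]
  · intro h
    exact absurd (Finset.mem_univ _) h

lemma mdiag_comm (d : PD k) (σ : Equiv.Perm (Fin n)) :
    permMat k n σ * Mdiag k n d = Mdiag k n d * permMat k n σ := by
  ext i j
  rw [permMat_mul_apply, mul_permMat_apply, mdiag_apply, mdiag_apply]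
  have hker : Setoid.ker (Sum.elim i (fun r => σ (j r))) =
      Setoid.ker (Sum.elim (fun r => σ⁻¹ (i r)) j) := by
    have : (Sum.elim i (fun r => σ (j r)) : Fin k ⊕ Fin k → Fin n) =
        fun z => σ (Sum.elim (fun r => σ⁻¹ (i r)) j z) := by
      funext z; rcases z with r | r <;> simp
    rw [this, ker_comp_perm]
  rw [hker]

lemma exists_perm_comp {α : Type*} {f g : α → Fin n}
    (h : Setoid.ker f = Setoid.ker g) :
    ∃ σ : Equiv.Perm (Fin n), ∀ x, σ (f x) = g x := by
  have hker : ∀ a b : α, f a = f b ↔ g a = g b := by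
    intro a b
    constructor
    · intro hf; exact (h ▸ (hf : (Setoid.ker f).r a b) : (Setoid.ker g).r a b)
    · intro hg; exact (h ▸ (hg : (Setoid.ker g).r a b) : (Setoid.ker f).r a b)
  let e : {y // y ∈ Set.range f} ≃ {y // y ∈ Set.range g} :=
    { toFun := fun yh => ⟨g yh.2.choose, Set.mem_range_self _⟩
      invFun := fun yh => ⟨f yh.2.choose, Set.mem_range_self _⟩
      left_inv := fun yh => Subtype.ext (by
        have h1 := yh.2.choose_spec
        have h2 : g (⟨g yh.2.choose, Set.mem_range_self _⟩ : {y // y ∈ Set.range g}).2.choose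
            = g yh.2.choose := (⟨g yh.2.choose, Set.mem_range_self _⟩ :
              {y // y ∈ Set.range g}).2.choose_spec
        show f _ = yh.1
        rw [(hker _ _).mpr h2, h1])
      right_inv := fun yh => Subtype.ext (by
        have h1 := yh.2.choose_spec
        have h2 : f (⟨f yh.2.choose, Set.mem_range_self _⟩ : {y // y ∈ Set.range f}).2.choose
            = f yh.2.choose := (⟨f yh.2.choose, Set.mem_range_self _⟩ :
              {y // y ∈ Set.range f}).2.choose_spec
        show g _ = yh.1
        rw [(hker _ _).mp h2, h1]) }
  refine ⟨e.extendSubtype, fun x => ?_⟩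
  rw [e.extendSubtype_apply_of_mem (f x) (Set.mem_range_self x)]
  show g (Set.mem_range_self (f := f) x).choose = g x
  exact (hker _ _).mp (Set.mem_range_self (f := f) x).choose_spec


noncomputable instance instFintypePD {k : ℕ} : Fintype (PD k) := Fintype.ofFinite _

/-- the 0-1 matrix of an exact kernel pattern -/
noncomputable def Ediag (k n : ℕ) (e : PD k) :
    Matrix (Fin k → Fin n) (Fin k → Fin n) ℂ := fun i j =>
  if Setoid.ker (Sum.elim i j) = e then 1 else 0

lemma mdiag_eq_sum (d : PD k) :
    Mdiag k n d = ∑ e : PD k, if d ≤ e then Ediag k n e else 0 := by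
  ext i j
  rw [mdiag_apply, Matrix.sum_apply]
  have hterm : ∀ e : PD k, (if d ≤ e then Ediag k n e else 0) i j
      = if Setoid.ker (Sum.elim i j) = e then (if d ≤ e then (1 : ℂ) else 0) else 0 := by
    intro e
    by_cases h1 : d ≤ e <;> by_cases h2 : Setoid.ker (Sum.elim i j) = e <;>
      simp [h1, h2, Ediag]
  simp only [hterm]
  rw [Finset.sum_ite_eq]
  simp

lemma ediag_mem_span (d : PD k) :
    Ediag k n d ∈ Submodule.span ℂ (Set.range (Mdiag k n)) := by
  refine (wellFounded_gt (α := PD k)).induction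
    (C := fun d => Ediag k n d ∈ Submodule.span ℂ (Set.range (Mdiag k n))) d ?_
  intro d ih
  have hsplit : (Finset.univ.filter (fun e : PD k => d ≤ e))
      = insert d (Finset.univ.filter (fun e : PD k => d < e)) := by
    ext e
    simp only [Finset.mem_filter, Finset.mem_insert, Finset.mem_univ, true_and]
    rw [le_iff_lt_or_eq, or_comm, eq_comm]
  have hd : Mdiag k n d = Ediag k n d
      + ∑ e ∈ Finset.univ.filter (fun e : PD k => d < e), Ediag k n e := by
    rw [mdiag_eq_sum, ← Finset.sum_filter, hsplit, Finset.sum_insert (by simp)]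
  have heq : Ediag k n d = Mdiag k n d
      - ∑ e ∈ Finset.univ.filter (fun e : PD k => d < e), Ediag k n e := by
    rw [hd, add_sub_cancel_right]
  rw [heq]
  exact sub_mem (Submodule.subset_span ⟨d, rfl⟩)
    (Submodule.sum_mem _ fun e he => ih e (Finset.mem_filter.mp he).2)

end Aux

/-- Schur–Weyl duality, surjectivity part: the map
`Φ_k : ℂA_k(n) → End(V^{⊗k})` determined on diagrams by the 0-1 matrices
`Mdiag` is an algebra homomorphism whose image is the centralizer
`End_{S_n}(V^{⊗k})` of the diagonal permutation action of `S_n`. -/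
theorem phi_hom_image_centralizer (k n : ℕ) (hn : 0 < n) :
    IsLinearMap ℂ (Phi k n) ∧
    (∀ a b : PA k, Phi k n (mulPA (n : ℂ) a b) = Phi k n a * Phi k n b) ∧
    Set.range (Phi k n) =
      {X : Matrix (Fin k → Fin n) (Fin k → Fin n) ℂ |
        ∀ σ : Equiv.Perm (Fin n), permMat k n σ * X = X * permMat k n σ} := by
  have hPhi : Phi k n = ⇑(Finsupp.linearCombination ℂ (Mdiag k n)) := by
    funext a
    rw [Finsupp.linearCombination_apply]
    rfl
  refine ⟨by rw [hPhi]; exact LinearMap.isLinear _, ?_, ?_⟩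
  · intro a b
    have key : ∀ d₁ d₂ : PD k, (a d₁ • Mdiag k n d₁) * (b d₂ • Mdiag k n d₂)
        = (a d₁ * b d₂ * (n : ℂ) ^ PD.removed d₁ d₂) • Mdiag k n (PD.comp d₁ d₂) := by
      intro d₁ d₂
      rw [smul_mul_assoc, mul_smul_comm, smul_smul, mdiag_mul hn, smul_smul, mul_assoc]
    rw [hPhi]
    have hL : (Finsupp.linearCombination ℂ (Mdiag k n)) (mulPA (n : ℂ) a b)
        = ∑ d₁ ∈ a.support, ∑ d₂ ∈ b.support,
          (a d₁ * b d₂ * (n : ℂ) ^ PD.removed d₁ d₂) • Mdiag k n (PD.comp d₁ d₂) := by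
      unfold mulPA
      rw [Finsupp.sum, map_sum]
      refine Finset.sum_congr rfl fun d₁ _ => ?_
      rw [Finsupp.sum, map_sum]
      refine Finset.sum_congr rfl fun d₂ _ => ?_
      rw [Finsupp.linearCombination_single]
    have hR : (Finsupp.linearCombination ℂ (Mdiag k n)) a
          * (Finsupp.linearCombination ℂ (Mdiag k n)) b
        = ∑ d₁ ∈ a.support, ∑ d₂ ∈ b.support,
          (a d₁ • Mdiag k n d₁) * (b d₂ • Mdiag k n d₂) := by
      rw [Finsupp.linearCombination_apply, Finsupp.linearCombination_apply,
        Finsupp.sum, Finsupp.sum, Finset.sum_mul_sum]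
    rw [hL, hR]
    exact Finset.sum_congr rfl fun d₁ _ => Finset.sum_congr rfl fun d₂ _ => (key d₁ d₂).symm
  · have hrange : Set.range (Phi k n)
        = (Submodule.span ℂ (Set.range (Mdiag k n)) : Set _) := by
      rw [hPhi, ← LinearMap.coe_range, Finsupp.range_linearCombination]
    rw [hrange]
    ext X
    simp only [SetLike.mem_coe, Set.mem_setOf_eq]
    constructor
    · intro hX σ
      induction hX using Submodule.span_induction with
      | mem M hM => obtain ⟨d, rfl⟩ := hM; exact mdiag_comm d σ
      | zero => simp
      | add M N _ _ hM hN => rw [Matrix.mul_add, Matrix.add_mul, hM, hN]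
      | smul c M _ hM => rw [Matrix.mul_smul, Matrix.smul_mul, hM]
    · intro hX
      have hinv : ∀ (σ : Equiv.Perm (Fin n)) (i j : Fin k → Fin n),
          X (fun r => σ (i r)) (fun r => σ (j r)) = X i j := by
        intro σ i j
        have h1 : (permMat k n σ * X) (fun r => σ (i r)) j
            = (X * permMat k n σ) (fun r => σ (i r)) j := by rw [hX σ]
        rw [permMat_mul_apply, mul_permMat_apply] at h1
        have h2 : (fun r => σ⁻¹ (σ (i r))) = i := by funext r; simp
        rw [h2] at h1
        exact h1.symm
      set coeff : PD k → ℂ := fun e =>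
        if h : ∃ p : (Fin k → Fin n) × (Fin k → Fin n), Setoid.ker (Sum.elim p.1 p.2) = e
        then X h.choose.1 h.choose.2 else 0 with hcoeff
      have hXeq : X = ∑ e : PD k, coeff e • Ediag k n e := by
        ext i j
        rw [Matrix.sum_apply]
        have hterm : ∀ e : PD k, (coeff e • Ediag k n e) i j
            = if Setoid.ker (Sum.elim i j) = e then coeff e else 0 := by
          intro e
          by_cases h : Setoid.ker (Sum.elim i j) = e <;> simp [Ediag, h]
        simp only [hterm]
        rw [Finset.sum_ite_eq]
        simp only [Finset.mem_univ, if_true]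
        simp only [hcoeff]
        have hex : ∃ p : (Fin k → Fin n) × (Fin k → Fin n),
            Setoid.ker (Sum.elim p.1 p.2) = Setoid.ker (Sum.elim i j) := ⟨(i, j), rfl⟩
        rw [dif_pos hex]
        obtain ⟨σ, hσ⟩ := exists_perm_comp hex.choose_spec
        have hi : (fun r => σ (hex.choose.1 r)) = i := funext fun r => hσ (Sum.inl r)
        have hj : (fun r => σ (hex.choose.2 r)) = j := funext fun r => hσ (Sum.inr r)
        rw [← hinv σ hex.choose.1 hex.choose.2, hi, hj]
      rw [hXeq]
      exact Submodule.sum_mem _ fun e _ => Submodule.smul_mem _ _ (ediag_mem_span e)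
end

section
/- Let A be a finite-dimensional algebra over a field such that the trace of the regular representation of A is nondegenerate. Then every finite-dimensional A-module is completely decomposable (a direct sum of simple modules). -/
/-!
Left multiplication by an element of the Jacobson radical of a finite-dimensional algebra is
nilpotent, so its trace vanishes. As the radical is a two-sided ideal, a nonzero element `a` of it
would have `tr (a * c) = 0` for every `c`, against nondegeneracy. Hence the radical is zero, and
an Artinian ring with zero Jacobson radical is semisimple, as are all modules over it.
-/

theorem IsArtinianRing.isNilpotent_of_mem_jacobson {R : Type*} [Ring R] [IsArtinianRing R]
    {x : R} (hx : x ∈ Ring.jacobson R) : IsNilpotent x := by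
  obtain ⟨n, hn⟩ := IsArtinianRing.isNilpotent_jacobson_bot (R := R)
  refine ⟨n, ?_⟩
  rw [Ideal.jacobson_bot] at hn
  simpa [hn] using Ideal.pow_mem_pow hx n

theorem LinearMap.trace_mulLeft_eq_zero_of_mem_jacobson (F : Type*) {A : Type*} [Field F]
    [Ring A] [Algebra F A] [FiniteDimensional F A] {a : A} (ha : a ∈ Ring.jacobson A) :
    LinearMap.trace F A (LinearMap.mulLeft F a) = 0 := by
  have : IsArtinianRing A := isArtinian_of_tower F inferInstance
  have hnil : IsNilpotent (LinearMap.mulLeft F a) :=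
    (LinearMap.isNilpotent_mulLeft_iff F a).mpr (IsArtinianRing.isNilpotent_of_mem_jacobson ha)
  exact (LinearMap.isNilpotent_trace_of_isNilpotent hnil).eq_zero

theorem Ring.jacobson_eq_bot_of_nondegenerate_trace (F : Type*) {A : Type*} [Field F] [Ring A]
    [Algebra F A] [FiniteDimensional F A]
    (hnd : ∀ a : A, a ≠ 0 → ∃ c : A, LinearMap.trace F A (LinearMap.mulLeft F (a * c)) ≠ 0) :
    Ring.jacobson A = ⊥ := by
  refine (Submodule.eq_bot_iff _).mpr fun a ha => ?_
  by_contra ha0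
  obtain ⟨c, hc⟩ := hnd a ha0
  exact hc (LinearMap.trace_mulLeft_eq_zero_of_mem_jacobson F (Ideal.mul_mem_right c _ ha))

/-- Maschke-type theorem: if `A` is a finite-dimensional algebra over a field
`F` such that the trace of the regular representation of `A` is nondegenerate,
then every finite-dimensional `A`-module is completely decomposable
(semisimple). -/
theorem maschke_of_nondegenerate_regular_trace
    (F A : Type) [Field F] [Ring A] [Algebra F A] [FiniteDimensional F A]
    (hnd : ∀ a : A, a ≠ 0 →
      ∃ c : A, LinearMap.trace F A (LinearMap.mulLeft F (a * c)) ≠ 0) :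
    ∀ (M : Type) [AddCommGroup M] [Module A M] [Module F M]
      [IsScalarTower F A M] [FiniteDimensional F M],
      IsSemisimpleModule A M := by
  have : IsArtinianRing A := isArtinian_of_tower F inferInstance
  have : IsSemisimpleRing A := IsArtinianRing.isSemisimpleRing_iff_jacobson.mpr
    (Ring.jacobson_eq_bot_of_nondegenerate_trace F hnd)
  intro M _ _ _ _ _
  infer_instance
end
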